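/- Let n ≥ 2, let k be a nonzero integer, and let ι ∈ Aut(F_n) be the automorphism sending every free generator x_i to x_i^{−1} (an involution). Then for every i with 1 ≤ i ≤ n−1 one has ι ∘ φ_k(σ_i) ∘ ι = φ_{−k}(σ_i); consequently, the images φ_k(B_n) and φ_{−k}(B_n) are conjugate subgroups of Aut(F_n): ι φ_k(B_n) ι^{−1} = φ_{−k}(B_n). -/

import Mathlib

/-- The defining relations of the braid group on `m + 1` strands (`m` generators
`σ_1, …, σ_m`, indexed here by `Fin m`): the commutation relations
`σ_i σ_j = σ_j σ_i` for `|i - j| > 1` and the braid relations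
`σ_i σ_{i+1} σ_i = σ_{i+1} σ_i σ_{i+1}`. -/
def braidRels (m : ℕ) : Set (FreeGroup (Fin m)) :=
  {r | (∃ i j : Fin m, (i : ℕ) + 1 < (j : ℕ) ∧
        r = FreeGroup.of i * FreeGroup.of j * (FreeGroup.of i)⁻¹ * (FreeGroup.of j)⁻¹) ∨
       (∃ i j : Fin m, (i : ℕ) + 1 = (j : ℕ) ∧
        r = FreeGroup.of i * FreeGroup.of j * FreeGroup.of i *
            (FreeGroup.of j * FreeGroup.of i * FreeGroup.of j)⁻¹)}

/-- The index in `Fin n` of the generator `x_i` of `F_n` acted on by `σ_i`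
(the strand index `i`, `0`-based). -/
def xL (n : ℕ) (i : Fin (n - 1)) : Fin n := ⟨i, by have := i.isLt; omega⟩

/-- The index in `Fin n` of the generator `x_{i+1}` of `F_n` acted on by `σ_i`. -/
def xR (n : ℕ) (i : Fin (n - 1)) : Fin n := ⟨(i : ℕ) + 1, by have := i.isLt; omega⟩

/-! Let `ι` invert every free generator. Then `ι` is an involution, and on the moved generator
`ι (x^k y x^(-k))⁻¹ = x^(-k) y x^k`, while `ι (x)⁻¹ = x` on all others; so conjugation by `ι`
carries `φ_k(σ_i)` to `φ_{-k}(σ_i)`. Two homomorphisms out of the braid group agreeing on the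
generators `σ_i` coincide, hence `conj ι ∘ φ_k = φ_{-k}` and the ranges correspond. -/

namespace FreeGroup

variable {α : Type*}

theorem mulAut_ext {f g : MulAut (FreeGroup α)} (h : ∀ a, f (of a) = g (of a)) : f = g :=
  MulEquiv.toMonoidHom_injective (ext_hom _ _ h)

section Inversion

variable {ι : MulAut (FreeGroup α)} (hι : ∀ a, ι (of a) = (of a)⁻¹)
include hι

theorem mul_self_eq_one_of_apply_of_eq_inv : ι * ι = 1 :=
  mulAut_ext fun a => by rw [MulAut.mul_apply, hι, _root_.map_inv, hι, inv_inv, MulAut.one_apply]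

theorem inv_eq_self_of_apply_of_eq_inv : ι⁻¹ = ι :=
  inv_eq_of_mul_eq_one_left (mul_self_eq_one_of_apply_of_eq_inv hι)

theorem mul_mul_self_apply_of (φ : MulAut (FreeGroup α)) (a : α) :
    (ι * φ * ι) (of a) = (ι (φ (of a)))⁻¹ := by
  rw [MulAut.mul_apply, MulAut.mul_apply, hι, _root_.map_inv, _root_.map_inv]

end Inversion

def IsWadaType1Move (k : ℤ) (a b : α) (φ : MulAut (FreeGroup α)) : Prop :=
  φ (of a) = of a ^ k * of b * of a ^ (-k) ∧ φ (of b) = of a ∧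
    ∀ c, c ≠ a → c ≠ b → φ (of c) = of c

theorem IsWadaType1Move.mul_mul_eq_of_neg {k : ℤ} {a b : α} {φ ψ ι : MulAut (FreeGroup α)}
    (hφ : IsWadaType1Move k a b φ) (hψ : IsWadaType1Move (-k) a b ψ)
    (hι : ∀ c, ι (of c) = (of c)⁻¹) : ι * φ * ι = ψ := by
  obtain ⟨hφa, hφb, hφc⟩ := hφ
  obtain ⟨hψa, hψb, hψc⟩ := hψ
  refine mulAut_ext fun c => ?_
  rw [mul_mul_self_apply_of hι]
  by_cases hca : c = a
  · subst hca
    rw [hφa, hψa, _root_.map_mul, _root_.map_mul, _root_.map_zpow, _root_.map_zpow, hι, hι]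
    group
  by_cases hcb : c = b
  · subst hcb
    rw [hφb, hψb, hι, inv_inv]
  · rw [hφc c hca hcb, hψc c hca hcb, hι, inv_inv]

end FreeGroup

theorem wada_type1_opposite_parameters_conjugate_general (n : ℕ) (k : ℤ)
    (ι : MulAut (FreeGroup (Fin n)))
    (hι : ∀ j : Fin n, ι (FreeGroup.of j) = (FreeGroup.of j)⁻¹)
    (φk φmk : PresentedGroup (braidRels (n - 1)) →* MulAut (FreeGroup (Fin n)))
    (hφk : ∀ i : Fin (n - 1),
      (φk (PresentedGroup.of i)) (FreeGroup.of (xL n i)) =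
          FreeGroup.of (xL n i) ^ k * FreeGroup.of (xR n i) * FreeGroup.of (xL n i) ^ (-k) ∧
      (φk (PresentedGroup.of i)) (FreeGroup.of (xR n i)) = FreeGroup.of (xL n i) ∧
      ∀ j : Fin n, j ≠ xL n i → j ≠ xR n i →
        (φk (PresentedGroup.of i)) (FreeGroup.of j) = FreeGroup.of j)
    (hφmk : ∀ i : Fin (n - 1),
      (φmk (PresentedGroup.of i)) (FreeGroup.of (xL n i)) =
          FreeGroup.of (xL n i) ^ (-k) * FreeGroup.of (xR n i) * FreeGroup.of (xL n i) ^ k ∧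
      (φmk (PresentedGroup.of i)) (FreeGroup.of (xR n i)) = FreeGroup.of (xL n i) ∧
      ∀ j : Fin n, j ≠ xL n i → j ≠ xR n i →
        (φmk (PresentedGroup.of i)) (FreeGroup.of j) = FreeGroup.of j) :
    (∀ i : Fin (n - 1),
        ι * φk (PresentedGroup.of i) * ι = φmk (PresentedGroup.of i)) ∧
    Subgroup.map (MulAut.conj ι).toMonoidHom φk.range = φmk.range := by
  have hgen (i : Fin (n - 1)) : ι * φk (PresentedGroup.of i) * ι = φmk (PresentedGroup.of i) := by
    have hmk : FreeGroup.IsWadaType1Move (-k) (xL n i) (xR n i) (φmk (PresentedGroup.of i)) := by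
      rw [FreeGroup.IsWadaType1Move, neg_neg]
      exact hφmk i
    exact FreeGroup.IsWadaType1Move.mul_mul_eq_of_neg (hφk i) hmk hι
  refine ⟨hgen, ?_⟩
  have hcomp : (MulAut.conj ι).toMonoidHom.comp φk = φmk :=
    PresentedGroup.ext fun i => by
      simp only [MonoidHom.comp_apply, MulEquiv.coe_toMonoidHom, MulAut.conj_apply,
        FreeGroup.inv_eq_self_of_apply_of_eq_inv hι, hgen]
  rw [← MonoidHom.range_comp, hcomp]

/-- For `n ≥ 2` and a nonzero integer `k`, let `ι ∈ Aut(F_n)` be the automorphism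
sending every free generator `x_j` to `x_j⁻¹`. Then for every generator `σ_i` of
`B_n` one has `ι ∘ φ_k(σ_i) ∘ ι = φ_{-k}(σ_i)`, where `φ_k, φ_{-k}` are Wada's
type (1) representations with parameters `k` and `-k`; consequently the images
`φ_k(B_n)` and `φ_{-k}(B_n)` are conjugate subgroups of `Aut(F_n)`:
`ι φ_k(B_n) ι⁻¹ = φ_{-k}(B_n)`. -/
theorem wada_type1_opposite_parameters_conjugate (n : ℕ) (hn : 2 ≤ n) (k : ℤ) (hk : k ≠ 0)
    (ι : MulAut (FreeGroup (Fin n)))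
    (hι : ∀ j : Fin n, ι (FreeGroup.of j) = (FreeGroup.of j)⁻¹)
    (φk φmk : PresentedGroup (braidRels (n - 1)) →* MulAut (FreeGroup (Fin n)))
    (hφk : ∀ i : Fin (n - 1),
      (φk (PresentedGroup.of i)) (FreeGroup.of (xL n i)) =
          FreeGroup.of (xL n i) ^ k * FreeGroup.of (xR n i) * FreeGroup.of (xL n i) ^ (-k) ∧
      (φk (PresentedGroup.of i)) (FreeGroup.of (xR n i)) = FreeGroup.of (xL n i) ∧
      ∀ j : Fin n, j ≠ xL n i → j ≠ xR n i →
        (φk (PresentedGroup.of i)) (FreeGroup.of j) = FreeGroup.of j)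
    (hφmk : ∀ i : Fin (n - 1),
      (φmk (PresentedGroup.of i)) (FreeGroup.of (xL n i)) =
          FreeGroup.of (xL n i) ^ (-k) * FreeGroup.of (xR n i) * FreeGroup.of (xL n i) ^ k ∧
      (φmk (PresentedGroup.of i)) (FreeGroup.of (xR n i)) = FreeGroup.of (xL n i) ∧
      ∀ j : Fin n, j ≠ xL n i → j ≠ xR n i →
        (φmk (PresentedGroup.of i)) (FreeGroup.of j) = FreeGroup.of j) :
    (∀ i : Fin (n - 1),
        ι * φk (PresentedGroup.of i) * ι = φmk (PresentedGroup.of i)) ∧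
    Subgroup.map (MulAut.conj ι).toMonoidHom φk.range = φmk.range :=
  wada_type1_opposite_parameters_conjugate_general n k ι hι φk φmk hφk hφmk
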